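/- arXiv:2406.03704 — 3 statements merged into one kernel-verified Lean document; each statement's English description precedes it below -/
import Mathlib

section
/- The ray mapping g, restricted to A, is a bijection from A onto A^r. -/
/-!
Translating `c` to the origin turns `g` into Mathlib's `gaugeRescale` from `A - c` to `Aʳ - c`,
which multiplies each vector by a positive scalar so that its gauge for `Aʳ - c` equals its gauge
for `A - c`. The rescaling in the opposite direction is its inverse, and a closed bounded convex
neighbourhood of `0` is exactly the sublevel set `{gauge ≤ 1}`, so each rescaling maps one set
into the other.
-/

open Set Classical

/-- The ray mapping `g` from the action space `A` to the relevant action set `Aʳ`: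
`g(c) = c`, and for `a ≠ c`,
`g(a) = c + (gauge_{A−c}(a−c) / gauge_{Aʳ−c}(a−c)) • (a−c)`. -/
noncomputable def rayMap {N : ℕ} (A Ar : Set (EuclideanSpace ℝ (Fin N)))
    (c : EuclideanSpace ℝ (Fin N)) (a : EuclideanSpace ℝ (Fin N)) :
    EuclideanSpace ℝ (Fin N) :=
  if a = c then c
  else c + (gauge ((· - c) '' A) (a - c) / gauge ((· - c) '' Ar) (a - c)) • (a - c)

open Filter Topology Bornology

theorem bijOn_gaugeRescale_closure {E : Type*} [AddCommGroup E] [Module ℝ E] [TopologicalSpace E]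
    [IsTopologicalAddGroup E] [ContinuousSMul ℝ E] [T1Space E] {s t : Set E}
    (hsc : Convex ℝ s) (hs₀ : s ∈ 𝓝 0) (hsb : IsVonNBounded ℝ s)
    (htc : Convex ℝ t) (ht₀ : t ∈ 𝓝 0) (htb : IsVonNBounded ℝ t) :
    BijOn (gaugeRescale s t) (closure s) (closure t) := by
  have hsa : Absorbent ℝ s := absorbent_nhds_zero hs₀
  have hta : Absorbent ℝ t := absorbent_nhds_zero ht₀
  refine InvOn.bijOn ⟨fun x _ ↦ ?_, fun y _ ↦ ?_⟩
    (mapsTo_gaugeRescale_closure hsc hs₀ htc (mem_of_mem_nhds ht₀) hta)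
    (mapsTo_gaugeRescale_closure htc ht₀ hsc (mem_of_mem_nhds hs₀) hsa)
  · rw [gaugeRescale_gaugeRescale hta htb, gaugeRescale_self_apply hsa hsb]
  · rw [gaugeRescale_gaugeRescale hsa hsb, gaugeRescale_self_apply hta htb]

theorem Set.BijOn.conj_translate {G : Type*} [AddCommGroup G] {f : G → G} {s t : Set G} (c : G)
    (hf : BijOn f ((· - c) '' s) ((· - c) '' t)) : BijOn (fun x ↦ c + f (x - c)) s t := by
  have hsub : BijOn (· - c) s ((· - c) '' s) := sub_left_injective.injOn.bijOn_image
  have hadd : BijOn (c + ·) ((· - c) '' t) t := by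
    convert (add_right_injective c).injOn.bijOn_image
    simp [image_image, add_sub_cancel]
  exact (hadd.comp hf).comp hsub

theorem Convex.image_sub_const {E : Type*} [AddCommGroup E] [Module ℝ E] {A : Set E}
    (hA : Convex ℝ A) (c : E) : Convex ℝ ((· - c) '' A) := by
  simpa only [sub_eq_neg_add] using hA.translate (-c)

theorem image_sub_const_mem_nhds_zero {G : Type*} [AddGroup G] [TopologicalSpace G]
    [IsTopologicalAddGroup G] {A : Set G} {c : G} (hA : A ∈ 𝓝 c) : (· - c) '' A ∈ 𝓝 (0 : G) := by
  simpa using (Homeomorph.subRight c).isOpenMap.image_mem_nhds hA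

theorem bijOn_add_gaugeRescale_sub {E : Type*} [NormedAddCommGroup E] [NormedSpace ℝ E]
    {A B : Set E} {c : E}
    (hAc : IsClosed A) (hAb : IsBounded A) (hAconv : Convex ℝ A) (hA : A ∈ 𝓝 c)
    (hBc : IsClosed B) (hBb : IsBounded B) (hBconv : Convex ℝ B) (hB : B ∈ 𝓝 c) :
    BijOn (fun a ↦ c + gaugeRescale ((· - c) '' A) ((· - c) '' B) (a - c)) A B := by
  have hclosed {S : Set E} (hS : IsClosed S) : closure ((· - c) '' S) = (· - c) '' S :=
    ((Homeomorph.subRight c).isClosedMap _ hS).closure_eq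
  have hbdd {S : Set E} (hS : IsBounded S) : IsVonNBounded ℝ ((· - c) '' S) :=
    NormedSpace.isVonNBounded_of_isBounded ℝ
      ((IsometryEquiv.subRight c).isometry.lipschitz.isBounded_image hS)
  refine BijOn.conj_translate c ?_
  simpa only [hclosed hAc, hclosed hBc] using
    bijOn_gaugeRescale_closure (hAconv.image_sub_const c) (image_sub_const_mem_nhds_zero hA)
      (hbdd hAb) (hBconv.image_sub_const c) (image_sub_const_mem_nhds_zero hB) (hbdd hBb)

theorem rayMap_eq_add_gaugeRescale_sub {N : ℕ} (A Ar : Set (EuclideanSpace ℝ (Fin N)))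
    (c : EuclideanSpace ℝ (Fin N)) :
    rayMap A Ar c = fun a ↦ c + gaugeRescale ((· - c) '' A) ((· - c) '' Ar) (a - c) := by
  ext1 a
  by_cases h : a = c <;> simp [rayMap, gaugeRescale, h]

theorem rayMap_bijOn_general {N : ℕ}
    (A Ar : Set (EuclideanSpace ℝ (Fin N)))
    (hAcomp : IsCompact A) (hAconv : Convex ℝ A)
    (hArcomp : IsCompact Ar) (hArconv : Convex ℝ Ar)
    (hsub : Ar ⊆ A) (c : EuclideanSpace ℝ (Fin N)) (hc : c ∈ interior Ar) :
    Set.BijOn (rayMap A Ar c) A Ar := by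
  have hAr : Ar ∈ 𝓝 c := mem_interior_iff_mem_nhds.1 hc
  rw [rayMap_eq_add_gaugeRescale_sub]
  exact bijOn_add_gaugeRescale_sub hAcomp.isClosed hAcomp.isBounded hAconv
    (mem_of_superset hAr hsub) hArcomp.isClosed hArcomp.isBounded hArconv hAr

/-- The ray mapping `g`, restricted to `A`, is a bijection from `A` onto `Aʳ`. -/
theorem rayMap_bijOn {N : ℕ} (hN : 1 ≤ N)
    (A Ar : Set (EuclideanSpace ℝ (Fin N)))
    (hAcomp : IsCompact A) (hAconv : Convex ℝ A)
    (hArcomp : IsCompact Ar) (hArconv : Convex ℝ Ar)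
    (hsub : Ar ⊆ A) (c : EuclideanSpace ℝ (Fin N)) (hc : c ∈ interior Ar) :
    Set.BijOn (rayMap A Ar c) A Ar :=
  rayMap_bijOn_general A Ar hAcomp hAconv hArcomp hArconv hsub c hc
end

section
/- The ray mapping g is injective on A: for all a₁, a₂ ∈ A, if a₁ ≠ a₂ then g(a₁) ≠ g(a₂). -/
/-!
Both gauges are positively homogeneous, so their ratio `ρ` is constant on every open ray from `c`,
and it is positive there because `c` is an interior point of the bounded sets `Ar ⊆ A`. Hence `g`
maps each ray from `c` into itself by a fixed positive dilation, and two points with the same image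
lie on a common ray, where that dilation is injective.
-/

open Set Classical

theorem injective_smul_self_of_pos_of_ray_invariant {E : Type*} [AddCommGroup E] [Module ℝ E]
    {ρ : E → ℝ} (hpos : ∀ x ≠ 0, 0 < ρ x) (hray : ∀ x, ∀ t : ℝ, 0 < t → ρ (t • x) = ρ x) :
    Function.Injective fun x ↦ ρ x • x := by
  have smul_self_ne_zero {x : E} (hx : x ≠ 0) : ρ x • x ≠ 0 := smul_ne_zero (hpos x hx).ne' hx
  intro x y hxy
  simp only at hxy
  rcases eq_or_ne x 0 with rfl | hx
  · by_contra hy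
    exact smul_self_ne_zero (Ne.symm hy) (by simpa using hxy.symm)
  rcases eq_or_ne y 0 with rfl | hy
  · exact absurd (by simpa using hxy) (smul_self_ne_zero hx)
  have hy_eq : y = (ρ x / ρ y) • x := by
    rw [div_eq_inv_mul, mul_smul, hxy, inv_smul_smul₀ (hpos y hy).ne']
  have hρ : ρ y = ρ x :=
    (congrArg ρ hy_eq).trans (hray x _ (div_pos (hpos x hx) (hpos y hy)))
  exact smul_right_injective E (hpos x hx).ne' (hρ ▸ hxy)

theorem gauge_div_gauge_smul_of_pos {E : Type*} [AddCommGroup E] [Module ℝ E] (s s' : Set E)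
    (x : E) {t : ℝ} (ht : 0 < t) : gauge s (t • x) / gauge s' (t • x) = gauge s x / gauge s' x := by
  simp only [gauge_smul_of_nonneg ht.le, smul_eq_mul, mul_div_mul_left _ _ ht.ne']

theorem gauge_image_sub_pos {E : Type*} [NormedAddCommGroup E] [NormedSpace ℝ E] {S : Set E}
    (hS : Bornology.IsBounded S) {c x : E} (hc : c ∈ interior S) (hx : x ≠ 0) :
    0 < gauge ((· - c) '' S) x := by
  have hbdd : Bornology.IsBounded ((· - c) '' S) :=
    (IsometryEquiv.subRight c).isometry.lipschitz.isBounded_image hS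
  have habs : Absorbent ℝ ((· - c) '' S) := by
    rw [image_sub_right]
    refine absorbent_nhds_zero <| (continuous_add_const c).continuousAt.preimage_mem_nhds ?_
    simpa using mem_interior_iff_mem_nhds.mp hc
  exact (gauge_pos habs (NormedSpace.isVonNBounded_of_isBounded ℝ hbdd)).mpr hx

theorem rayMap_eq_add_smul {N : ℕ} (A Ar : Set (EuclideanSpace ℝ (Fin N)))
    (c a : EuclideanSpace ℝ (Fin N)) :
    rayMap A Ar c a =
      c + (gauge ((· - c) '' A) (a - c) / gauge ((· - c) '' Ar) (a - c)) • (a - c) := by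
  unfold rayMap
  split_ifs with h <;> simp [h]

theorem rayMap_injective_general {N : ℕ}
    (A Ar : Set (EuclideanSpace ℝ (Fin N)))
    (hAcomp : IsCompact A)
    (hsub : Ar ⊆ A) (c : EuclideanSpace ℝ (Fin N)) (hc : c ∈ interior Ar) :
    ∀ a₁ ∈ A, ∀ a₂ ∈ A, a₁ ≠ a₂ → rayMap A Ar c a₁ ≠ rayMap A Ar c a₂ := by
  have hinj := injective_smul_self_of_pos_of_ray_invariant
    (ρ := fun x ↦ gauge ((· - c) '' A) x / gauge ((· - c) '' Ar) x)
    (fun x hx ↦ div_pos (gauge_image_sub_pos hAcomp.isBounded (interior_mono hsub hc) hx)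
      (gauge_image_sub_pos (hAcomp.isBounded.subset hsub) hc hx))
    (fun x _ ht ↦ gauge_div_gauge_smul_of_pos _ _ x ht)
  intro a₁ _ a₂ _ hne heq
  rw [rayMap_eq_add_smul, rayMap_eq_add_smul] at heq
  exact hne (sub_left_injective (hinj (add_left_cancel heq)))

/-- The ray mapping `g` is injective on `A`:
for all `a₁, a₂ ∈ A`, if `a₁ ≠ a₂` then `g(a₁) ≠ g(a₂)`. -/
theorem rayMap_injective {N : ℕ} (hN : 1 ≤ N)
    (A Ar : Set (EuclideanSpace ℝ (Fin N)))
    (hAcomp : IsCompact A) (hAconv : Convex ℝ A)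
    (hArcomp : IsCompact Ar) (hArconv : Convex ℝ Ar)
    (hsub : Ar ⊆ A) (c : EuclideanSpace ℝ (Fin N)) (hc : c ∈ interior Ar) :
    ∀ a₁ ∈ A, ∀ a₂ ∈ A, a₁ ≠ a₂ → rayMap A Ar c a₁ ≠ rayMap A Ar c a₂ :=
  rayMap_injective_general A Ar hAcomp hsub c hc
end

section
/- Let Z(c₁, G₁) and Z(c₂, G₂) be zonotopes in ℝ^N with G₁ ∈ ℝ^{N×P₁} and G₂ ∈ ℝ^{N×P₂}. Suppose there exist Γ ∈ ℝ^{P₂×P₁} and β ∈ ℝ^{P₂} such that G₁ = G₂ Γ, c₂ − c₁ = G₂ β, and for every row index i ∈ {1, …, P₂}, Σ_{j=1}^{P₁} |Γ_{i j}| + |β_i| ≤ 1. Then Z(c₁, G₁) ⊆ Z(c₂, G₂). -/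
open Matrix

/-- The zonotope `Z(c, G) = { c + G β : ‖β‖_∞ ≤ 1 }` with center `c ∈ ℝ^N` and
generator matrix `G ∈ ℝ^{N×ι}`. -/
def zonotope {N : ℕ} {ι : Type*} [Fintype ι] (c : Fin N → ℝ)
    (G : Matrix (Fin N) ι ℝ) : Set (Fin N → ℝ) :=
  { x | ∃ β : ι → ℝ, (∀ i, |β i| ≤ 1) ∧ x = c + G.mulVec β }

theorem Matrix.abs_mulVec_apply_le_sum_abs {R m n : Type*} [Ring R] [LinearOrder R]
    [IsStrictOrderedRing R] [Fintype n] (A : Matrix m n R) {b : n → R}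
    (hb : ∀ j, |b j| ≤ 1) (i : m) : |(A *ᵥ b) i| ≤ ∑ j, |A i j| :=
  calc |(A *ᵥ b) i| = |∑ j, A i j * b j| := rfl
    _ ≤ ∑ j, |A i j * b j| := Finset.abs_sum_le_sum_abs _ _
    _ ≤ ∑ j, |A i j| := Finset.sum_le_sum fun j _ => by
        rw [abs_mul]
        exact mul_le_of_le_one_right (abs_nonneg _) (hb j)

/-- Sufficient condition for zonotope containment: if `G₁ = G₂ Γ`, `c₂ − c₁ = G₂ β`,
and every row of `[Γ, β]` has absolute sum at most `1`, then
`Z(c₁, G₁) ⊆ Z(c₂, G₂)`. -/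
theorem zonotope_containment {N P₁ P₂ : ℕ}
    (c₁ c₂ : Fin N → ℝ)
    (G₁ : Matrix (Fin N) (Fin P₁) ℝ) (G₂ : Matrix (Fin N) (Fin P₂) ℝ)
    (Γ : Matrix (Fin P₂) (Fin P₁) ℝ) (β : Fin P₂ → ℝ)
    (hG : G₁ = G₂ * Γ)
    (hc : c₂ - c₁ = G₂.mulVec β)
    (hrow : ∀ i : Fin P₂, (∑ j : Fin P₁, |Γ i j|) + |β i| ≤ 1) :
    zonotope c₁ G₁ ⊆ zonotope c₂ G₂ := by
  rintro x ⟨b, hb, rfl⟩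
  -- `c₁ + G₂ Γ b = c₂ + G₂ (Γ b - β)`, so `Γ b - β` is a coefficient vector for the same point.
  refine ⟨Γ *ᵥ b - β, fun i => ?_, ?_⟩
  · calc |(Γ *ᵥ b - β) i| ≤ |(Γ *ᵥ b) i| + |β i| := abs_sub _ _
      _ ≤ (∑ j, |Γ i j|) + |β i| := by gcongr; exact Γ.abs_mulVec_apply_le_sum_abs hb i
      _ ≤ 1 := hrow i
  · rw [hG, mulVec_sub, ← mulVec_mulVec, ← hc]
    abel
end
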